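/- arXiv:2602.06797 — 4 statements merged into one kernel-verified Lean document; each statement's English description precedes it below -/
import Mathlib

section
/- Let ζ : [0,1] → [0,1] be continuous with ζ(0)=1, ζ(x) > 0 for x < 1, and suppose there exist γ > 0, δ ∈ (0,1) and constants c₁, c₂ > 0 with c₁(1−x)^γ ≤ ζ(x) ≤ c₂(1−x)^γ for x ∈ [δ,1]. Define ρ(x) = ∫₀ˣ ζ(u)du, ρ₁ = ρ(1), and the intrinsic-time profile ζ̃(y) = ζ(ρ^{−1}(y·ρ₁)). Then there exist δ̃ ∈ (0,1) and constants C₁, C₂ > 0 such that C₁(1−y)^{γ/(γ+1)} ≤ ζ̃(y) ≤ C₂(1−y)^{γ/(γ+1)} for all y ∈ [δ̃,1]. -/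
/-- A power-decay tail of exponent `γ` in training steps becomes a
power-decay tail of exponent `γ/(γ+1)` in intrinsic time. -/
theorem stmt6 (ζ : ℝ → ℝ) (γ δ c₁ c₂ : ℝ)
    (hζc : ContinuousOn ζ (Set.Icc 0 1)) (hζ0 : ζ 0 = 1)
    (hζrange : ∀ x ∈ Set.Icc (0:ℝ) 1, ζ x ∈ Set.Icc (0:ℝ) 1)
    (hζpos : ∀ x ∈ Set.Ico (0:ℝ) 1, 0 < ζ x)
    (hγ : 0 < γ) (hδ : δ ∈ Set.Ioo (0:ℝ) 1) (hc₁ : 0 < c₁) (hc₂ : 0 < c₂)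
    (htail : ∀ x ∈ Set.Icc δ 1, c₁*(1-x)^γ ≤ ζ x ∧ ζ x ≤ c₂*(1-x)^γ)
    (ρ : ℝ → ℝ) (hρ : ∀ x, ρ x = ∫ u in (0:ℝ)..x, ζ u)
    (ρinv : ℝ → ℝ)
    (hρinv : ∀ y ∈ Set.Icc (0:ℝ) (ρ 1), ρinv y ∈ Set.Icc (0:ℝ) 1 ∧ ρ (ρinv y) = y) :
    ∃ δ' ∈ Set.Ioo (0:ℝ) 1, ∃ C₁ C₂ : ℝ, 0 < C₁ ∧ 0 < C₂ ∧
      ∀ y ∈ Set.Icc δ' 1,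
        C₁*(1-y)^(γ/(γ+1)) ≤ ζ (ρinv (y * ρ 1)) ∧
        ζ (ρinv (y * ρ 1)) ≤ C₂*(1-y)^(γ/(γ+1)) := by
  have hγ1 : (0:ℝ) < γ + 1 := by linarith
  have hγ1ne : γ + 1 ≠ 0 := ne_of_gt hγ1
  -- integrability of ζ on subintervals of [0,1]
  have hζint : ∀ a b : ℝ, a ∈ Set.Icc (0:ℝ) 1 → b ∈ Set.Icc (0:ℝ) 1 →
      IntervalIntegrable ζ MeasureTheory.volume a b := by
    intro a b ha hb
    exact (hζc.mono (Set.uIcc_subset_Icc ha hb)).intervalIntegrable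
  -- positivity of integrals of ζ on nondegenerate subintervals
  have hintpos : ∀ a b : ℝ, a ∈ Set.Icc (0:ℝ) 1 → b ∈ Set.Icc (0:ℝ) 1 → a < b →
      0 < ∫ u in a..b, ζ u := by
    intro a b ha hb hab
    refine intervalIntegral.intervalIntegral_pos_of_pos_on (hζint a b ha hb) ?_ hab
    intro x hx
    exact hζpos x ⟨le_of_lt (lt_of_le_of_lt ha.1 hx.1), lt_of_lt_of_le hx.2 hb.2⟩
  have h01 : (0:ℝ) ∈ Set.Icc (0:ℝ) 1 := by constructor <;> norm_num
  have h11 : (1:ℝ) ∈ Set.Icc (0:ℝ) 1 := by constructor <;> norm_num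
  have hδmem : δ ∈ Set.Icc (0:ℝ) 1 := ⟨hδ.1.le, hδ.2.le⟩
  have hρ1pos : 0 < ρ 1 := by rw [hρ 1]; exact hintpos 0 1 h01 h11 one_pos
  have hρδpos : 0 < ρ δ := by rw [hρ δ]; exact hintpos 0 δ h01 hδmem hδ.1
  -- ρ splits: ρ 1 - ρ x = ∫ x..1 ζ for x ∈ [0,1]
  have hsplit : ∀ x ∈ Set.Icc (0:ℝ) 1, ρ 1 - ρ x = ∫ u in x..1, ζ u := by
    intro x hx
    have := intervalIntegral.integral_add_adjacent_intervals
      (hζint 0 x h01 hx) (hζint x 1 hx h11)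
    rw [hρ 1, hρ x, ← this]; ring
  have hρδlt : ρ δ < ρ 1 := by
    have := hsplit δ hδmem
    have hpos := hintpos δ 1 hδmem h11 hδ.2
    linarith
  -- the exact value of ∫ x..1 (1-u)^γ
  have hpow : ∀ x : ℝ, ∫ u in x..1, (1-u)^γ = (1-x)^(γ+1) / (γ+1) := by
    intro x
    have h1 : ∫ u in x..1, (1-u)^γ = ∫ t in (1-(1:ℝ))..(1-x), t^γ :=
      intervalIntegral.integral_comp_sub_left (fun t => t^γ) 1
    rw [h1]
    have : (1:ℝ) - 1 = 0 := by norm_num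
    rw [this, integral_rpow (Or.inl (by linarith))]
    rw [Real.zero_rpow hγ1ne]
    ring
  -- constants
  set ρ₁ := ρ 1 with hρ₁
  set K₁ := (γ+1) * ρ₁ / c₂ with hK₁
  set K₂ := (γ+1) * ρ₁ / c₁ with hK₂
  have hK₁pos : 0 < K₁ := by positivity
  have hK₂pos : 0 < K₂ := by positivity
  refine ⟨ρ δ / ρ₁, ⟨by positivity, (div_lt_one hρ1pos).mpr hρδlt⟩,
    c₁ * K₁ ^ (γ/(γ+1)), c₂ * K₂ ^ (γ/(γ+1)), by positivity, by positivity, ?_⟩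
  intro y hy
  have hy1 : y ≤ 1 := hy.2
  have hy0 : 0 ≤ y := le_trans (by positivity) hy.1
  have hyρ : y * ρ₁ ∈ Set.Icc (0:ℝ) ρ₁ := by
    constructor
    · positivity
    · nlinarith
  obtain ⟨hxmem, hxρ⟩ := hρinv (y * ρ₁) hyρ
  set x := ρinv (y * ρ₁) with hxdef
  -- x ≥ δ
  have hxδ : δ ≤ x := by
    by_contra hlt
    push_neg at hlt
    have hsp := intervalIntegral.integral_add_adjacent_intervals
      (hζint 0 x h01 hxmem) (hζint x δ hxmem hδmem)
    have hρxδ : ρ δ - ρ x = ∫ u in x..δ, ζ u := by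
      rw [hρ δ, hρ x, ← hsp]; ring
    have hpos : 0 < ∫ u in x..δ, ζ u := hintpos x δ hxmem hδmem hlt
    have hle : ρ δ ≤ y * ρ₁ := by
      have := hy.1
      calc ρ δ = (ρ δ / ρ₁) * ρ₁ := by field_simp
        _ ≤ y * ρ₁ := by nlinarith
    rw [hxρ] at hρxδ
    linarith
  have hxδ' : x ∈ Set.Icc δ 1 := ⟨hxδ, hxmem.2⟩
  have hx1 : x ≤ 1 := hxmem.2
  have h1x : 0 ≤ 1 - x := by linarith
  have h1y : 0 ≤ 1 - y := by linarith
  -- tail of ρ: (1-y)*ρ₁ = ∫ x..1 ζ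
  have htailρ : (1-y) * ρ₁ = ∫ u in x..1, ζ u := by
    have := hsplit x hxmem
    rw [hxρ] at this
    linarith [this]
  -- integrand comparison on [x,1]
  have hcont : Continuous (fun u : ℝ => (1-u)^γ) :=
    (continuous_const.sub continuous_id).rpow_const (fun u => Or.inr hγ.le)
  have hintc₁ : IntervalIntegrable (fun u => c₁ * (1-u)^γ) MeasureTheory.volume x 1 :=
    ((continuous_const.mul hcont)).intervalIntegrable x 1
  have hintc₂ : IntervalIntegrable (fun u => c₂ * (1-u)^γ) MeasureTheory.volume x 1 :=
    ((continuous_const.mul hcont)).intervalIntegrable x 1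
  have hζintx : IntervalIntegrable ζ MeasureTheory.volume x 1 := hζint x 1 hxmem h11
  have hmem : ∀ u ∈ Set.Icc x 1, u ∈ Set.Icc δ 1 := by
    intro u hu; exact ⟨le_trans hxδ hu.1, hu.2⟩
  have hlow : c₁ * (1-x)^(γ+1) / (γ+1) ≤ (1-y) * ρ₁ := by
    rw [htailρ]
    have := intervalIntegral.integral_mono_on hx1 hintc₁ hζintx
      (fun u hu => (htail u (hmem u hu)).1)
    calc c₁ * (1-x)^(γ+1) / (γ+1) = c₁ * ((1-x)^(γ+1) / (γ+1)) := by ring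
      _ = c₁ * ∫ u in x..1, (1-u)^γ := by rw [hpow]
      _ = ∫ u in x..1, c₁ * (1-u)^γ := by rw [intervalIntegral.integral_const_mul]
      _ ≤ _ := this
  have hhigh : (1-y) * ρ₁ ≤ c₂ * (1-x)^(γ+1) / (γ+1) := by
    rw [htailρ]
    have := intervalIntegral.integral_mono_on hx1 hζintx hintc₂
      (fun u hu => (htail u (hmem u hu)).2)
    calc (∫ u in x..1, ζ u) ≤ ∫ u in x..1, c₂ * (1-u)^γ := this
      _ = c₂ * ∫ u in x..1, (1-u)^γ := by rw [intervalIntegral.integral_const_mul]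
      _ = c₂ * (1-x)^(γ+1) / (γ+1) := by rw [hpow]; ring
  -- bounds on (1-x)^(γ+1)
  have hb1 : K₁ * (1-y) ≤ (1-x)^(γ+1) := by
    rw [hK₁, div_mul_eq_mul_div, div_le_iff₀ hc₂]
    rw [le_div_iff₀ hγ1] at hhigh
    calc (γ+1)*ρ₁*(1-y) = (1-y)*ρ₁*(γ+1) := by ring
      _ ≤ c₂*(1-x)^(γ+1) := hhigh
      _ = (1-x)^(γ+1)*c₂ := by ring
  have hb2 : (1-x)^(γ+1) ≤ K₂ * (1-y) := by
    rw [hK₂, div_mul_eq_mul_div, le_div_iff₀ hc₁]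
    rw [div_le_iff₀ hγ1] at hlow
    calc (1-x)^(γ+1)*c₁ = c₁*(1-x)^(γ+1) := by ring
      _ ≤ (1-y)*ρ₁*(γ+1) := hlow
      _ = (γ+1)*ρ₁*(1-y) := by ring
  -- bounds on 1-x via rpow (1/(γ+1))
  have hinv : 0 ≤ (γ+1)⁻¹ := by positivity
  have hxid : ((1-x)^(γ+1))^((γ+1)⁻¹) = 1 - x := by
    rw [← Real.rpow_mul h1x, mul_inv_cancel₀ hγ1ne, Real.rpow_one]
  have hKy₁ : (0:ℝ) ≤ K₁ * (1-y) := by positivity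
  have hKy₂ : (0:ℝ) ≤ K₂ * (1-y) := by positivity
  have hxb1 : (K₁*(1-y))^((γ+1)⁻¹) ≤ 1 - x := by
    rw [← hxid]; exact Real.rpow_le_rpow hKy₁ hb1 hinv
  have hxb2 : 1 - x ≤ (K₂*(1-y))^((γ+1)⁻¹) := by
    rw [← hxid]; exact Real.rpow_le_rpow (Real.rpow_nonneg h1x _) hb2 hinv
  have hgb1 : (K₁*(1-y))^(γ/(γ+1)) ≤ (1-x)^γ := by
    have := Real.rpow_le_rpow (Real.rpow_nonneg hKy₁ _) hxb1 hγ.le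
    rwa [← Real.rpow_mul hKy₁, inv_mul_eq_div] at this
  have hgb2 : (1-x)^γ ≤ (K₂*(1-y))^(γ/(γ+1)) := by
    have := Real.rpow_le_rpow h1x hxb2 hγ.le
    rwa [← Real.rpow_mul hKy₂, inv_mul_eq_div] at this
  obtain ⟨htl, htu⟩ := htail x hxδ'
  constructor
  · calc c₁ * K₁^(γ/(γ+1)) * (1-y)^(γ/(γ+1))
        = c₁ * ((K₁*(1-y))^(γ/(γ+1))) := by
          rw [Real.mul_rpow hK₁pos.le h1y]; ring
      _ ≤ c₁ * (1-x)^γ := by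
          exact mul_le_mul_of_nonneg_left hgb1 hc₁.le
      _ ≤ ζ x := htl
  · calc ζ x ≤ c₂ * (1-x)^γ := htu
      _ ≤ c₂ * ((K₂*(1-y))^(γ/(γ+1))) :=
          mul_le_mul_of_nonneg_left hgb2 hc₂.le
      _ = c₂ * K₂^(γ/(γ+1)) * (1-y)^(γ/(γ+1)) := by
          rw [Real.mul_rpow hK₂pos.le h1y]; ring
end

section
/- Suppose λ_j ≤ c·j^{−β} for all j ≥ 1, where c > 0 and β > 1. Then there exists C > 0 (depending only on c, β) such that for all τ > 0, ∑_{j=1}^∞ λ_j² e^{−2λ_j τ} ≤ C·min{1, τ^{−2+1/β}}. -/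
/-- Key telescoping inequality: for `y ≥ 1` and `β > 1`,
`(2β-1) (y+1)^{-2β} ≤ y^{1-2β} - (y+1)^{1-2β}`. -/
lemma stmt7_key {β : ℝ} (hβ : 1 < β) {y : ℝ} (hy : 1 ≤ y) :
    (2*β - 1) * (y+1)^(-(2*β)) ≤ y^(1-2*β) - (y+1)^(1-2*β) := by
  have hy0 : 0 < y := lt_of_lt_of_le one_pos hy
  have hy1 : 0 < y + 1 := by linarith
  have hp : 1 ≤ 2*β - 1 := by linarith
  -- Bernoulli: (1 + 1/y)^(2β-1) ≥ 1 + (2β-1)/y ≥ 1 + (2β-1)/(y+1)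
  have hbern : 1 + (2*β-1) * (1/y) ≤ (1 + 1/y)^(2*β-1) := by
    have h0 : (0:ℝ) ≤ 1/y := by positivity
    exact one_add_mul_self_le_rpow_one_add (by linarith) hp
  have h1 : 1 + (2*β-1)/(y+1) ≤ ((y+1)/y)^(2*β-1) := by
    have he : (1 : ℝ) + 1/y = (y+1)/y := by field_simp
    rw [← he]
    refine le_trans ?_ hbern
    have hinv : 1/(y+1) ≤ 1/y := by
      apply one_div_le_one_div_of_le hy0; linarith
    have : (2*β-1)/(y+1) ≤ (2*β-1) * (1/y) := by
      rw [div_eq_mul_one_div]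
      exact mul_le_mul_of_nonneg_left hinv (by linarith)
    linarith
  have hdiv : ((y+1)/y)^(2*β-1) = (y+1)^(2*β-1) / y^(2*β-1) :=
    Real.div_rpow hy1.le hy0.le _
  -- multiply h1 by (y+1)^(1-2β) > 0
  have hpow : 0 < (y+1)^(1-2*β) := Real.rpow_pos_of_pos hy1 _
  have h2 : (1 + (2*β-1)/(y+1)) * (y+1)^(1-2*β) ≤ y^(1-2*β) := by
    calc (1 + (2*β-1)/(y+1)) * (y+1)^(1-2*β)
        ≤ ((y+1)^(2*β-1) / y^(2*β-1)) * (y+1)^(1-2*β) := by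
          rw [hdiv] at h1; exact mul_le_mul_of_nonneg_right h1 hpow.le
      _ = y^(1-2*β) := by
          rw [div_mul_eq_mul_div, ← Real.rpow_add hy1]
          have he : 2*β - 1 + (1 - 2*β) = 0 := by ring
          rw [he, Real.rpow_zero]
          rw [show (1 - 2*β) = -(2*β-1) by ring, Real.rpow_neg hy0.le, one_div]
  have h3 : (1 + (2*β-1)/(y+1)) * (y+1)^(1-2*β)
      = (y+1)^(1-2*β) + (2*β-1) * (y+1)^(-(2*β)) := by
    have he : (y+1)^(1-2*β) / (y+1) = (y+1)^(-(2*β)) := by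
      nth_rewrite 2 [← Real.rpow_one (y+1)]
      rw [← Real.rpow_sub hy1]
      ring_nf
    rw [add_mul, one_mul, div_mul_eq_mul_div, mul_div_assoc, he]
  rw [h3] at h2
  linarith

set_option maxHeartbeats 1000000 in
/-- Spectral Laplace-type bound: if `λ_j ≤ c j^{−β}` with `β > 1`, then
`∑_{j≥1} λ_j² e^{−2λ_j τ} ≤ C min{1, τ^{−2+1/β}}` for all `τ > 0`. -/
theorem stmt7 (l : ℕ → ℝ) (c β : ℝ) (hc : 0 < c) (hβ : 1 < β)
    (hl0 : ∀ j, 0 ≤ l j)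
    (hl : ∀ j : ℕ, 1 ≤ j → l j ≤ c * (j:ℝ)^(-β)) :
    ∃ C : ℝ, 0 < C ∧ ∀ τ : ℝ, 0 < τ →
      (∑' j : ℕ, (l (j+1))^2 * Real.exp (-2 * l (j+1) * τ))
        ≤ C * min 1 (τ^(-2+1/β)) := by
  have hβ0 : 0 < β := by linarith
  have h2β : (0:ℝ) < 2*β - 1 := by linarith
  -- majorant and its summability
  set M : ℕ → ℝ := fun j => ((j:ℝ)+1)^(-(2*β)) with hM
  have hM0 : ∀ j, 0 ≤ M j := fun j => Real.rpow_nonneg (by positivity) _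
  have hsummM : Summable M := by
    have h0 : Summable (fun n : ℕ => (n:ℝ)^(-(2*β))) :=
      Real.summable_nat_rpow.mpr (by linarith)
    have h1 := (summable_nat_add_iff 1).mpr h0
    refine h1.congr fun j => ?_
    simp [hM, Nat.cast_add]
  set S : ℝ := ∑' j : ℕ, M j with hS
  have hS0 : 0 ≤ S := tsum_nonneg hM0
  set C : ℝ := c^2 * S + 2 + c^2/(2*β-1) with hC
  have hCpos : 0 < C := by
    have h1 : 0 ≤ c^2 * S := by positivity
    have h2 : 0 < c^2/(2*β-1) := by positivity
    simp only [hC]; linarith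
  refine ⟨C, hCpos, fun τ hτ => ?_⟩
  set a : ℕ → ℝ := fun j => (l (j+1))^2 * Real.exp (-2 * l (j+1) * τ) with ha
  have ha0 : ∀ j, 0 ≤ a j := fun j => by
    have := hl0 (j+1); positivity
  -- pointwise bound by majorant
  have hA : ∀ j : ℕ, a j ≤ c^2 * M j := by
    intro j
    have hj1 : (0:ℝ) < (j:ℝ)+1 := by positivity
    have hlj : l (j+1) ≤ c * ((j:ℝ)+1)^(-β) := by
      have := hl (j+1) (Nat.le_add_left 1 j)
      simpa [Nat.cast_add] using this
    have hsq : (l (j+1))^2 ≤ c^2 * M j := by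
      have h1 : (l (j+1))^2 ≤ (c * ((j:ℝ)+1)^(-β))^2 := by
        have h := hl0 (j+1)
        nlinarith
      have h2 : (c * ((j:ℝ)+1)^(-β))^2 = c^2 * M j := by
        rw [mul_pow, hM]
        congr 1
        rw [← Real.rpow_natCast (((j:ℝ)+1)^(-β)) 2, ← Real.rpow_mul hj1.le]
        norm_num
        ring_nf
      linarith
    have hexp : Real.exp (-2 * l (j+1) * τ) ≤ 1 := by
      rw [Real.exp_le_one_iff]
      have := hl0 (j+1); nlinarith
    calc a j ≤ (l (j+1))^2 * 1 := by
          apply mul_le_mul_of_nonneg_left hexp (by positivity)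
      _ = (l (j+1))^2 := mul_one _
      _ ≤ c^2 * M j := hsq
  have hsumma : Summable a :=
    Summable.of_nonneg_of_le ha0 hA (hsummM.mul_left _)
  have htsumM : (∑' j, a j) ≤ c^2 * S := by
    calc (∑' j, a j) ≤ ∑' j, c^2 * M j :=
          Summable.tsum_le_tsum hA hsumma (hsummM.mul_left _)
      _ = c^2 * S := tsum_mul_left
  have hexpneg : -2 + 1/β ≤ 0 := by
    have : 1/β < 1 := by rw [div_lt_one hβ0]; linarith
    linarith
  rcases le_or_gt τ 1 with hτ1 | hτ1
  · -- small τ : min = 1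
    have hmin : min 1 (τ^(-2+1/β)) = 1 :=
      min_eq_left (Real.one_le_rpow_of_pos_of_le_one_of_nonpos hτ hτ1 hexpneg)
    rw [hmin, mul_one]
    refine le_trans htsumM ?_
    have : 0 < c^2/(2*β-1) := by positivity
    simp only [hC]; linarith
  · -- large τ : min = τ^(-2+1/β)
    have hτ1' : (1:ℝ) ≤ τ := hτ1.le
    have hmin : min 1 (τ^(-2+1/β)) = τ^(-2+1/β) :=
      min_eq_right (Real.rpow_le_one_of_one_le_of_nonpos hτ1' hexpneg)
    rw [hmin]
    have hτb1 : (1:ℝ) ≤ τ^(1/β) :=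
      Real.one_le_rpow hτ1' (by positivity)
    have hτbpos : (0:ℝ) < τ^(1/β) := lt_of_lt_of_le one_pos hτb1
    set N : ℕ := ⌈τ^(1/β)⌉₊ with hN
    have hN1 : 1 ≤ N := Nat.one_le_iff_ne_zero.mpr (by
      intro h
      rw [hN] at h
      have := Nat.ceil_eq_zero.mp h
      linarith)
    have hτN : τ^(1/β) ≤ (N:ℝ) := Nat.le_ceil _
    have hNpos : (0:ℝ) < (N:ℝ) := lt_of_lt_of_le hτbpos hτN
    have hNle : (N:ℝ) ≤ 2 * τ^(1/β) := by
      have h := Nat.ceil_lt_add_one hτbpos.le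
      have h' : (N:ℝ) < τ^(1/β) + 1 := by exact_mod_cast h
      linarith
    -- split the sum
    have hsplit := Summable.sum_add_tsum_nat_add N hsumma
    -- head bound : each term ≤ τ^(-2 : ℝ)
    have hτ2pos : (0:ℝ) < τ^2 := by positivity
    have hhead_term : ∀ j, a j ≤ τ^(-2 : ℝ) := by
      intro j
      set x := l (j+1) with hx
      have hx0 : 0 ≤ x := hl0 _
      have h1 : x*τ ≤ Real.exp (x*τ) := by
        linarith [Real.add_one_le_exp (x*τ)]
      have h2 : (x*τ)^2 ≤ Real.exp (2*x*τ) := by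
        have h := mul_le_mul h1 h1 (by positivity) (Real.exp_pos _).le
        calc (x*τ)^2 = (x*τ)*(x*τ) := sq (x*τ)
          _ ≤ Real.exp (x*τ) * Real.exp (x*τ) := h
          _ = Real.exp (2*x*τ) := by rw [← Real.exp_add]; congr 1; ring
      have hτ2 : τ^(-2:ℝ) = (τ^2)⁻¹ := by
        rw [Real.rpow_neg hτ.le, Real.rpow_two]
      have hE : Real.exp (-2*x*τ) = (Real.exp (2*x*τ))⁻¹ := by
        rw [← Real.exp_neg]; congr 1; ring
      show x^2 * Real.exp (-2*x*τ) ≤ τ^(-2:ℝ)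
      rw [hτ2, hE, inv_eq_one_div (τ^2), le_div_iff₀ hτ2pos]
      have heq : x^2 * (Real.exp (2*x*τ))⁻¹ * τ^2
          = (x*τ)^2 / Real.exp (2*x*τ) := by
        field_simp
      rw [heq, div_le_one (Real.exp_pos _)]
      exact h2
    have hhead : (∑ j ∈ Finset.range N, a j) ≤ (N:ℝ) * τ^(-2:ℝ) := by
      calc (∑ j ∈ Finset.range N, a j)
          ≤ ∑ j ∈ Finset.range N, τ^(-2:ℝ) :=
            Finset.sum_le_sum fun j _ => hhead_term j
        _ = (N:ℝ) * τ^(-2:ℝ) := by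
            rw [Finset.sum_const, Finset.card_range, nsmul_eq_mul]
    -- tail bound via telescoping
    set G : ℕ → ℝ := fun k => ((N:ℝ)+(k:ℝ))^(1-2*β) / (2*β-1) with hG
    have hG0 : ∀ k, 0 ≤ G k := fun k => by
      have : (0:ℝ) ≤ ((N:ℝ)+(k:ℝ))^(1-2*β) := Real.rpow_nonneg (by positivity) _
      simp only [hG]
      positivity
    have htail_term : ∀ j : ℕ, M (j + N) ≤ G j - G (j + 1) := by
      intro j
      have hy : (1:ℝ) ≤ (N:ℝ)+(j:ℝ) := by
        have : (1:ℝ) ≤ (N:ℝ) := by exact_mod_cast hN1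
        have hj : (0:ℝ) ≤ (j:ℝ) := Nat.cast_nonneg j
        linarith
      have hkey := stmt7_key hβ hy
      have hMval : M (j + N) = (((N:ℝ)+(j:ℝ))+1)^(-(2*β)) := by
        simp only [hM]
        push_cast
        ring_nf
      have hGj : G j = ((N:ℝ)+(j:ℝ))^(1-2*β) / (2*β-1) := rfl
      have hGj1 : G (j+1) = (((N:ℝ)+(j:ℝ))+1)^(1-2*β) / (2*β-1) := by
        simp only [hG]
        push_cast
        ring_nf
      rw [hMval, hGj, hGj1, div_sub_div_same, le_div_iff₀ h2β]
      nlinarith [hkey]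
    have htail_psum : ∀ n : ℕ, (∑ j ∈ Finset.range n, M (j + N)) ≤ G 0 := by
      intro n
      calc (∑ j ∈ Finset.range n, M (j + N))
          ≤ ∑ j ∈ Finset.range n, (G j - G (j+1)) :=
            Finset.sum_le_sum fun j _ => htail_term j
        _ = G 0 - G n := Finset.sum_range_sub' G n
        _ ≤ G 0 := by linarith [hG0 n]
    have htail_tsum : (∑' j : ℕ, M (j + N)) ≤ G 0 :=
      Real.tsum_le_of_sum_range_le (fun j => hM0 _) htail_psum
    have htail : (∑' j : ℕ, a (j + N)) ≤ c^2 * G 0 := by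
      calc (∑' j : ℕ, a (j + N))
          ≤ ∑' j : ℕ, c^2 * M (j + N) :=
            Summable.tsum_le_tsum (fun j => hA (j+N))
              ((summable_nat_add_iff N).mpr hsumma)
              ((summable_nat_add_iff N).mpr (hsummM.mul_left _))
        _ = c^2 * ∑' j : ℕ, M (j + N) := tsum_mul_left
        _ ≤ c^2 * G 0 := by
            apply mul_le_mul_of_nonneg_left htail_tsum (by positivity)
    -- combine
    have hT0 : (0:ℝ) ≤ τ^(-2+1/β) := Real.rpow_nonneg hτ.le _
    have hhead2 : (N:ℝ) * τ^(-2:ℝ) ≤ 2 * τ^(-2+1/β) := by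
      have h1 : (N:ℝ) * τ^(-2:ℝ) ≤ (2 * τ^(1/β)) * τ^(-2:ℝ) := by
        apply mul_le_mul_of_nonneg_right hNle (Real.rpow_nonneg hτ.le _)
      have h2 : τ^(1/β) * τ^(-2:ℝ) = τ^(-2+1/β) := by
        rw [← Real.rpow_add hτ]
        congr 1
        ring
      calc (N:ℝ) * τ^(-2:ℝ) ≤ (2 * τ^(1/β)) * τ^(-2:ℝ) := h1
        _ = 2 * (τ^(1/β) * τ^(-2:ℝ)) := by ring
        _ = 2 * τ^(-2+1/β) := by rw [h2]
    have htail2 : c^2 * G 0 ≤ (c^2/(2*β-1)) * τ^(-2+1/β) := by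
      have hNpow : (N:ℝ)^(1-2*β) ≤ (τ^(1/β))^(1-2*β) :=
        Real.rpow_le_rpow_of_nonpos hτbpos hτN (by linarith)
      have hpow2 : (τ^(1/β))^(1-2*β) = τ^(-2+1/β) := by
        rw [← Real.rpow_mul hτ.le]
        congr 1
        field_simp
        ring
      have hG0val : G 0 = (N:ℝ)^(1-2*β) / (2*β-1) := by
        simp [hG]
      have hre : (c^2/(2*β-1)) * τ^(-2+1/β) = c^2 * (τ^(-2+1/β)/(2*β-1)) := by
        ring
      rw [hG0val, hre]
      have hNT : (N:ℝ)^(1-2*β) ≤ τ^(-2+1/β) := hpow2 ▸ hNpow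
      gcongr
    have hfinal : (∑' j, a j) ≤ (2 + c^2/(2*β-1)) * τ^(-2+1/β) := by
      rw [← hsplit]
      calc (∑ j ∈ Finset.range N, a j) + ∑' j : ℕ, a (j + N)
          ≤ (N:ℝ) * τ^(-2:ℝ) + c^2 * G 0 := add_le_add hhead htail
        _ ≤ 2 * τ^(-2+1/β) + (c^2/(2*β-1)) * τ^(-2+1/β) :=
            add_le_add hhead2 htail2
        _ = (2 + c^2/(2*β-1)) * τ^(-2+1/β) := by ring
    refine le_trans hfinal ?_
    apply mul_le_mul_of_nonneg_right ?_ hT0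
    have : 0 ≤ c^2 * S := by positivity
    simp only [hC]
    linarith
end

section
/- Let α ∈ (0,1), s ∈ (0, α), a' ∈ (0,1), and define G̃(r) = N^{−s}(1 − r + a'r)^{−s} + N^{−α}((a'r)^{−α} − (1 − r + a'r)^{−α}) for r ∈ (0,1). Then any stationary point r* of G̃ in (0, 1/2] satisfies r* ≍ N^{−(α−s)/(α+1)} as N → ∞ (up to constants depending on s, α, a'). -/
/-- Optimal decay-phase fraction in the hard-task regime: any stationary
point `r* ∈ (0,1/2]` of
`G̃(r) = N^{−s}(1−r+a'r)^{−s} + N^{−α}((a'r)^{−α} − (1−r+a'r)^{−α})`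
satisfies `r* ≍ N^{−(α−s)/(α+1)}` as `N → ∞`. -/
theorem stmt16 (s α a' : ℝ) (hα : α ∈ Set.Ioo (0:ℝ) 1)
    (hs : s ∈ Set.Ioo (0:ℝ) α) (ha' : a' ∈ Set.Ioo (0:ℝ) 1) :
    ∃ c₁ c₂ : ℝ, 0 < c₁ ∧ 0 < c₂ ∧ ∃ N₀ : ℝ, ∀ N : ℝ, N₀ ≤ N →
      ∀ r ∈ Set.Ioc (0:ℝ) (1/2),
        deriv (fun r : ℝ =>
          N^(-s)*(1-r+a'*r)^(-s)
            + N^(-α)*((a'*r)^(-α) - (1-r+a'*r)^(-α))) r = 0 →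
        c₁ * N^(-((α-s)/(α+1))) ≤ r ∧ r ≤ c₂ * N^(-((α-s)/(α+1))) := by
  obtain ⟨hα0, hα1⟩ := hα
  obtain ⟨hs0, hsα⟩ := hs
  obtain ⟨ha0, ha1⟩ := ha'
  have hα1' : (0:ℝ) < α + 1 := by linarith
  set q : ℝ := -(α+1)⁻¹ with hq
  have hqneg : q ≤ 0 := by
    simp only [hq, neg_nonpos]
    positivity
  have haα : (0:ℝ) < a' ^ α := Real.rpow_pos_of_pos ha0 α
  set K₁ : ℝ := s*(1-a')/2 * a'^α / α with hK₁
  set K₂ : ℝ := 4*s*(1-a') * a'^α / α with hK₂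
  have hK₁0 : 0 < K₁ := by
    have : (0:ℝ) < 1 - a' := by linarith
    positivity
  have hK₂0 : 0 < K₂ := by
    have : (0:ℝ) < 1 - a' := by linarith
    positivity
  have hx0 : (0:ℝ) < 8*α/s := by positivity
  refine ⟨K₂ ^ q, K₁ ^ q, Real.rpow_pos_of_pos hK₂0 q, Real.rpow_pos_of_pos hK₁0 q,
    max 1 ((8*α/s) ^ (α-s)⁻¹), ?_⟩
  intro N hN r hr hder
  obtain ⟨hr0, hr2⟩ := hr
  have hN1 : (1:ℝ) ≤ N := le_trans (le_max_left _ _) hN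
  have hN0 : (0:ℝ) < N := by linarith
  -- N^(α-s) ≥ 8α/s
  have hNas : 8*α/s ≤ N ^ (α-s) := by
    have h1 : (8*α/s) ^ (α-s)⁻¹ ≤ N := le_trans (le_max_right _ _) hN
    have h2 : ((8*α/s) ^ (α-s)⁻¹) ^ (α-s) ≤ N ^ (α-s) :=
      Real.rpow_le_rpow (Real.rpow_nonneg hx0.le _) h1 (by linarith)
    rwa [← Real.rpow_mul hx0.le, inv_mul_cancel₀ (by linarith : α - s ≠ 0),
      Real.rpow_one] at h2
  -- basic facts about b
  set b : ℝ := 1 - r + a'*r with hb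
  have hbhalf : (1/2 : ℝ) ≤ b := by nlinarith
  have hb0 : (0:ℝ) < b := by linarith
  have hb1 : b ≤ 1 := by nlinarith
  have har : (0:ℝ) < a'*r := by positivity
  -- compute the derivative
  have hlin : HasDerivAt (fun r : ℝ => 1 - r + a'*r) (a'-1) r := by
    have h := ((hasDerivAt_const r (1:ℝ)).sub (hasDerivAt_id r)).add
      ((hasDerivAt_id r).const_mul a')
    exact h.congr_deriv (by ring)
  have hg1 : HasDerivAt (fun r : ℝ => (1-r+a'*r)^(-s))
      ((a'-1) * (-s) * b^(-s-1)) r := hlin.rpow_const (Or.inl hb0.ne')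
  have hg2 : HasDerivAt (fun r : ℝ => (a'*r)^(-α))
      (a' * (-α) * (a'*r)^(-α-1)) r := by
    have h : HasDerivAt (fun r : ℝ => a'*r) a' r := by
      simpa using (hasDerivAt_id r).const_mul a'
    exact h.rpow_const (Or.inl har.ne')
  have hg3 : HasDerivAt (fun r : ℝ => (1-r+a'*r)^(-α))
      ((a'-1) * (-α) * b^(-α-1)) r := hlin.rpow_const (Or.inl hb0.ne')
  have hD : HasDerivAt (fun r : ℝ =>
      N^(-s)*(1-r+a'*r)^(-s) + N^(-α)*((a'*r)^(-α) - (1-r+a'*r)^(-α)))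
      (N^(-s) * ((a'-1) * (-s) * b^(-s-1))
        + N^(-α) * (a' * (-α) * (a'*r)^(-α-1) - (a'-1) * (-α) * b^(-α-1))) r :=
    (hg1.const_mul _).add ((hg2.sub hg3).const_mul _)
  have hD0 : N^(-s) * ((a'-1) * (-s) * b^(-s-1))
      + N^(-α) * (a' * (-α) * (a'*r)^(-α-1) - (a'-1) * (-α) * b^(-α-1)) = 0 := by
    rw [← hD.deriv]; exact hder
  -- rearranged stationarity equation
  have hEq : α * a' * N^(-α) * (a'*r)^(-α-1)
      = s*(1-a') * N^(-s) * b^(-s-1) - α*(1-a') * N^(-α) * b^(-α-1) := by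
    linear_combination -hD0
  -- bounds on the b-powers
  have hXpos : (0:ℝ) < b^(-s-1) := Real.rpow_pos_of_pos hb0 _
  have hX1 : (1:ℝ) ≤ b^(-s-1) := by
    have := Real.rpow_le_rpow_of_nonpos hb0 hb1 (by linarith : -s-1 ≤ 0)
    simpa using this
  have h24 : ∀ p : ℝ, p ≤ 2 → (2:ℝ)^p ≤ 4 := by
    intro p hp
    have := Real.rpow_le_rpow_of_exponent_le (by norm_num : (1:ℝ) ≤ 2) hp
    calc (2:ℝ)^p ≤ (2:ℝ)^(2:ℝ) := this
      _ = 4 := by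
        rw [show (2:ℝ) = ((2:ℕ):ℝ) by norm_num, Real.rpow_natCast]; norm_num
  have hhalf : ∀ p : ℝ, ((1/2 : ℝ))^(-p-1) = (2:ℝ)^(p+1) := by
    intro p
    rw [show (1/2:ℝ) = 2⁻¹ by norm_num, ← Real.rpow_neg_one (2:ℝ),
      ← Real.rpow_mul (by norm_num)]
    ring_nf
  have hX4 : b^(-s-1) ≤ 4 := by
    have h1 : b^(-s-1) ≤ ((1/2:ℝ))^(-s-1) :=
      Real.rpow_le_rpow_of_nonpos (by norm_num) hbhalf (by linarith)
    have h2 : ((1/2:ℝ))^(-s-1) ≤ 4 := by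
      rw [hhalf s]; exact h24 _ (by linarith)
    linarith
  have hZpos : (0:ℝ) < b^(-α-1) := Real.rpow_pos_of_pos hb0 _
  have hZ4 : b^(-α-1) ≤ 4 := by
    have h1 : b^(-α-1) ≤ ((1/2:ℝ))^(-α-1) :=
      Real.rpow_le_rpow_of_nonpos (by norm_num) hbhalf (by linarith)
    have h2 : ((1/2:ℝ))^(-α-1) ≤ 4 := by
      rw [hhalf α]; exact h24 _ (by linarith)
    linarith
  have hNs : (0:ℝ) < N^(-s) := Real.rpow_pos_of_pos hN0 _
  have hNα : (0:ℝ) < N^(-α) := Real.rpow_pos_of_pos hN0 _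
  have hNprod : N^(α-s) * N^(-α) = N^(-s) := by
    rw [← Real.rpow_add hN0]; ring_nf
  have h1a : (0:ℝ) < 1 - a' := by linarith
  -- N-largeness condition
  have hNcond : 8*α*N^(-α) ≤ s*N^(-s) := by
    have h := mul_le_mul_of_nonneg_right hNas (mul_pos hs0 hNα).le
    calc 8*α*N^(-α) = 8*α/s * (s * N^(-α)) := by field_simp
      _ ≤ N^(α-s) * (s * N^(-α)) := h
      _ = s*N^(-s) := by rw [show N^(α-s) * (s * N^(-α)) = s * (N^(α-s)*N^(-α)) by ring,
            hNprod]
  -- two-sided bound on the key quantity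
  have hup : α * a' * N^(-α) * (a'*r)^(-α-1) ≤ 4*s*(1-a') * N^(-s) := by
    rw [hEq]
    have h1 : s*(1-a')*N^(-s) * b^(-s-1) ≤ s*(1-a')*N^(-s) * 4 :=
      mul_le_mul_of_nonneg_left hX4 (by positivity)
    have h2 : (0:ℝ) < α*(1-a')*N^(-α) * b^(-α-1) := by positivity
    linarith [h1, h2]
  have hlo : s*(1-a')/2 * N^(-s) ≤ α * a' * N^(-α) * (a'*r)^(-α-1) := by
    rw [hEq]
    have h1 : s*(1-a')*N^(-s) * 1 ≤ s*(1-a')*N^(-s) * b^(-s-1) :=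
      mul_le_mul_of_nonneg_left hX1 (by positivity)
    have h2 : α*(1-a')*N^(-α) * b^(-α-1) ≤ α*(1-a')*N^(-α) * 4 :=
      mul_le_mul_of_nonneg_left hZ4 (by positivity)
    have h3 : (1-a')/2 * (8*α*N^(-α)) ≤ (1-a')/2 * (s*N^(-s)) :=
      mul_le_mul_of_nonneg_left hNcond (by positivity)
    linarith [h1, h2, h3]
  -- rewrite in terms of r^(-(α+1))
  set R : ℝ := r ^ (-(α+1)) with hR
  have hkey : α * a' * N^(-α) * (a'*r)^(-α-1) = α * (a'^α)⁻¹ * N^(-α) * R := by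
    rw [hR, Real.mul_rpow ha0.le hr0.le,
      show (-α-1 : ℝ) = -(α+1) by ring]
    have : a' * a'^(-(α+1)) = (a'^α)⁻¹ := by
      rw [← Real.rpow_neg ha0.le]
      nth_rewrite 1 [← Real.rpow_one a']
      rw [← Real.rpow_add ha0]
      ring_nf
    calc α * a' * N^(-α) * (a'^(-(α+1)) * r^(-(α+1)))
        = α * (a' * a'^(-(α+1))) * N^(-α) * r^(-(α+1)) := by ring
      _ = α * (a'^α)⁻¹ * N^(-α) * r^(-(α+1)) := by rw [this]
  rw [hkey] at hup hlo
  have hA : (0:ℝ) < α * (a'^α)⁻¹ * N^(-α) := by positivity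
  -- identities A * (K * N^(α-s)) = c * N^(-s)
  have hid : ∀ c : ℝ, α * (a'^α)⁻¹ * N^(-α) * (c * a'^α / α * N^(α-s)) = c * N^(-s) := by
    intro c
    have : α * (a'^α)⁻¹ * N^(-α) * (c * a'^α / α * N^(α-s))
        = c * ((a'^α)⁻¹ * a'^α) * (α / α) * (N^(α-s) * N^(-α)) := by ring
    rw [this, inv_mul_cancel₀ haα.ne', div_self hα0.ne', hNprod]; ring
  have hRlo : K₁ * N^(α-s) ≤ R := by
    have h := hlo
    rw [← hid (s*(1-a')/2)] at h
    have := (mul_le_mul_iff_right₀ hA).mp h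
    simpa [hK₁, mul_div_assoc] using this
  have hRhi : R ≤ K₂ * N^(α-s) := by
    have h := hup
    rw [← hid (4*s*(1-a'))] at h
    have h2 := (mul_le_mul_iff_right₀ hA).mp h
    simpa [hK₂, mul_div_assoc] using h2
  -- apply x ↦ x^q
  have hRpos : (0:ℝ) < R := Real.rpow_pos_of_pos hr0 _
  have hrrec : R ^ q = r := by
    rw [hR, ← Real.rpow_mul hr0.le]
    rw [show (-(α+1)) * q = 1 by rw [hq]; field_simp, Real.rpow_one]
  have hpow : ∀ K : ℝ, 0 < K → (K * N^(α-s)) ^ q = K^q * N^(-((α-s)/(α+1))) := by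
    intro K hK
    rw [Real.mul_rpow hK.le (Real.rpow_nonneg hN0.le _), ← Real.rpow_mul hN0.le]
    congr 1
    rw [hq]; field_simp
  constructor
  · have h := Real.rpow_le_rpow_of_nonpos hRpos hRhi hqneg
    rw [hrrec, hpow K₂ hK₂0] at h
    exact h
  · have h := Real.rpow_le_rpow_of_nonpos (by positivity : (0:ℝ) < K₁ * N^(α-s)) hRlo hqneg
    rw [hrrec, hpow K₁ hK₁0] at h
    exact h
end

section
/- Let γ > 0, η₀ ∈ (0,1], N ≥ 2, η_i = η₀(1−i/N)^γ, t_k = ∑_{i=0}^{k−1}η_i, and let m₀ be the least integer with t_N (m₀/N)^{γ+1} ≥ 1 (assume m₀ ≤ N). Then ∑_{m=0}^{m₀} η₀²((m+1)/N)^{2γ} ≤ C·η₀·t_N^{−γ/(γ+1)} for a constant C depending only on γ. -/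
/-- Tail part of the noise sum for power-decay SGD:
`∑_{m=0}^{m₀} η₀²((m+1)/N)^{2γ} ≤ C η₀ t_N^{−γ/(γ+1)}` where `m₀` is the
least integer with `t_N (m₀/N)^{γ+1} ≥ 1` (assuming `m₀ ≤ N`). -/
theorem stmt17 (γ : ℝ) (hγ : 0 < γ) :
    ∃ C : ℝ, 0 < C ∧
      ∀ (N m₀ : ℕ) (η₀ : ℝ), 2 ≤ N → 0 < η₀ → η₀ ≤ 1 →
        let η : ℕ → ℝ := fun i => η₀ * (1 - (i:ℝ)/(N:ℝ))^γ
        let t : ℕ → ℝ := fun k => ∑ i ∈ Finset.range k, η i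
        m₀ ≤ N →
        1 ≤ t N * ((m₀:ℝ)/(N:ℝ))^(γ+1) →
        (∀ m : ℕ, m < m₀ → t N * ((m:ℝ)/(N:ℝ))^(γ+1) < 1) →
        (∑ m ∈ Finset.range (m₀+1), η₀^2 * (((m:ℝ)+1)/(N:ℝ))^(2*γ))
          ≤ C * η₀ * (t N)^(-(γ/(γ+1))) := by
  have hγ1 : (0:ℝ) < γ + 1 := by linarith
  refine ⟨(3:ℝ)^(2*γ+1) * (2:ℝ)^(γ+1), by positivity, ?_⟩
  intro N m₀ η₀ hN hη0 hη1 η t hm₀N hge hmin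
  have hN0 : (0:ℝ) < (N:ℝ) := by
    have : 0 < N := by omega
    exact_mod_cast this
  set T := t N with hTdef
  have hTsum : T = ∑ i ∈ Finset.range N, η₀ * (1 - (i:ℝ)/(N:ℝ))^γ := rfl
  have hηnonneg : ∀ i ∈ Finset.range N, 0 ≤ η₀ * (1 - (i:ℝ)/(N:ℝ))^γ := by
    intro i hi
    have hi' : (i:ℝ) ≤ N := by exact_mod_cast (Finset.mem_range.mp hi).le
    have hb : (0:ℝ) ≤ 1 - (i:ℝ)/N := by
      rw [sub_nonneg]; exact div_le_one_of_le₀ hi' hN0.le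
    positivity
  -- upper bound T ≤ N
  have hTN : T ≤ (N:ℝ) := by
    rw [hTsum]
    calc ∑ i ∈ Finset.range N, η₀ * (1 - (i:ℝ)/(N:ℝ))^γ
        ≤ ∑ _i ∈ Finset.range N, (1:ℝ) := by
          apply Finset.sum_le_sum
          intro i hi
          have hi' : (i:ℝ) ≤ N := by exact_mod_cast (Finset.mem_range.mp hi).le
          have hb0 : (0:ℝ) ≤ 1 - (i:ℝ)/N := by
            rw [sub_nonneg]; exact div_le_one_of_le₀ hi' hN0.le
          have hb1 : 1 - (i:ℝ)/N ≤ 1 := by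
            have : 0 ≤ (i:ℝ)/N := by positivity
            linarith
          have h1 := Real.rpow_le_one hb0 hb1 hγ.le
          have h2 : (0:ℝ) ≤ (1 - (i:ℝ)/N)^γ := Real.rpow_nonneg hb0 γ
          nlinarith
      _ = N := by simp
  -- lower bound : η₀ * N ≤ 2^(γ+1) * T
  have h2γpos : (0:ℝ) < (2:ℝ)^γ := Real.rpow_pos_of_pos two_pos γ
  have hlow : η₀ * (N:ℝ) ≤ (2:ℝ)^(γ+1) * T := by
    set n := (N+1)/2 with hn
    have hnN : n ≤ N := by omega
    have h2n : (N:ℝ) ≤ 2 * (n:ℝ) := by exact_mod_cast (by omega : N ≤ 2*n)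
    have hterm : ∀ i ∈ Finset.range n, η₀ / (2:ℝ)^γ ≤ η₀ * (1 - (i:ℝ)/N)^γ := by
      intro i hi
      have hi2 : 2*i ≤ N := by have := Finset.mem_range.mp hi; omega
      have hi2' : (2:ℝ)*(i:ℝ) ≤ N := by exact_mod_cast hi2
      have hdiv : (i:ℝ)/N ≤ 1/2 := by
        rw [div_le_div_iff₀ hN0 two_pos]; linarith
      have hhalf : (1:ℝ)/2 ≤ 1 - (i:ℝ)/N := by linarith
      have hmono := Real.rpow_le_rpow (by norm_num : (0:ℝ) ≤ 1/2) hhalf hγ.le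
      have h12 : ((1:ℝ)/2)^γ = ((2:ℝ)^γ)⁻¹ := by
        rw [one_div, ← Real.inv_rpow (by norm_num : (0:ℝ) ≤ 2)]
      calc η₀ / (2:ℝ)^γ = η₀ * ((1:ℝ)/2)^γ := by rw [h12]; ring
        _ ≤ η₀ * (1 - (i:ℝ)/N)^γ := mul_le_mul_of_nonneg_left hmono hη0.le
    have hs1 : (n:ℝ) * (η₀/(2:ℝ)^γ) ≤ ∑ i ∈ Finset.range n, η₀ * (1 - (i:ℝ)/N)^γ := by
      have := Finset.card_nsmul_le_sum (Finset.range n)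
        (fun i => η₀ * (1 - (i:ℝ)/N)^γ) (η₀/(2:ℝ)^γ) hterm
      simpa [nsmul_eq_mul] using this
    have hs2 : ∑ i ∈ Finset.range n, η₀ * (1 - (i:ℝ)/N)^γ ≤ T := by
      rw [hTsum]
      exact Finset.sum_le_sum_of_subset_of_nonneg (Finset.range_subset_range.mpr hnN)
        (fun i hi _ => hηnonneg i hi)
    have h2exp : (2:ℝ)^(γ+1) = 2 * (2:ℝ)^γ := by
      rw [Real.rpow_add two_pos, Real.rpow_one]; ring
    have heq : 2 * (2:ℝ)^γ * ((n:ℝ) * (η₀/(2:ℝ)^γ)) = 2 * (n:ℝ) * η₀ := by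
      field_simp
    have hstep : η₀ * (N:ℝ) ≤ 2 * (n:ℝ) * η₀ := by nlinarith
    calc η₀ * (N:ℝ) ≤ 2 * (n:ℝ) * η₀ := hstep
      _ = 2 * (2:ℝ)^γ * ((n:ℝ) * (η₀/(2:ℝ)^γ)) := heq.symm
      _ ≤ 2 * (2:ℝ)^γ * T := by
          have hle := hs1.trans hs2
          have : (0:ℝ) ≤ 2 * (2:ℝ)^γ := by positivity
          nlinarith
      _ = (2:ℝ)^(γ+1) * T := by rw [h2exp]
  have hT0 : 0 < T := by nlinarith [Real.rpow_pos_of_pos two_pos (γ+1)]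
  -- B := T^(1/(γ+1))
  set B := T^((1:ℝ)/(γ+1)) with hBdef
  have hB0 : 0 < B := Real.rpow_pos_of_pos hT0 _
  have hBle : B ≤ (N:ℝ) := by
    have h1 : B ≤ (N:ℝ)^((1:ℝ)/(γ+1)) := Real.rpow_le_rpow hT0.le hTN (by positivity)
    have h2 : (N:ℝ)^((1:ℝ)/(γ+1)) ≤ (N:ℝ)^(1:ℝ) := by
      apply Real.rpow_le_rpow_of_exponent_le
      · exact_mod_cast (by omega : 1 ≤ N)
      · rw [div_le_one hγ1]; linarith
    rw [Real.rpow_one] at h2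
    exact h1.trans h2
  -- m₀ ≥ 1
  have hm₀1 : 1 ≤ m₀ := by
    by_contra h
    push_neg at h
    interval_cases m₀
    rw [Nat.cast_zero, zero_div, Real.zero_rpow hγ1.ne', mul_zero] at hge
    linarith
  -- (m₀ - 1) * B < N
  have hkey : ((m₀:ℝ) - 1) * B < N := by
    have h1 := hmin (m₀ - 1) (by omega)
    have hc : ((m₀ - 1 : ℕ):ℝ) = (m₀:ℝ) - 1 := by
      push_cast [Nat.cast_sub hm₀1]; ring
    rw [hc] at h1
    set x := ((m₀:ℝ)-1)/N with hx
    have hm₀R : (1:ℝ) ≤ (m₀:ℝ) := by exact_mod_cast hm₀1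
    have hx0 : 0 ≤ x := by
      apply div_nonneg _ hN0.le; linarith
    have hxlt : x^(γ+1) < 1/T := by
      rw [lt_div_iff₀ hT0]
      calc x^(γ+1) * T = T * x^(γ+1) := by ring
        _ < 1 := h1
    have hmono := Real.rpow_lt_rpow (by positivity : (0:ℝ) ≤ x^(γ+1)) hxlt
      (by positivity : 0 < (1:ℝ)/(γ+1))
    have hxx : (x^(γ+1))^((1:ℝ)/(γ+1)) = x := by
      rw [← Real.rpow_mul hx0, mul_one_div, div_self hγ1.ne', Real.rpow_one]
    have hTB : ((1:ℝ)/T)^((1:ℝ)/(γ+1)) = 1/B := by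
      rw [hBdef, one_div T, Real.inv_rpow hT0.le]
      exact (one_div _).symm
    rw [hxx, hTB] at hmono
    have : ((m₀:ℝ)-1) * B < 1 * N := by
      rw [← div_lt_div_iff₀ hN0 hB0]
      exact hmono
    linarith
  -- K := m₀ + 1
  set K := (m₀:ℝ) + 1 with hK
  have hKB : K * B ≤ 3 * N := by
    have h1 : K * B = ((m₀:ℝ) - 1) * B + 2 * B := by ring
    nlinarith
  have hKpos : 0 < K := by positivity
  have hKdiv : K / N ≤ 3 / B := by
    rw [div_le_div_iff₀ hN0 hB0]; linarith
  have hKle : K ≤ 3 * N / B := by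
    rw [le_div_iff₀ hB0]; linarith
  -- sum bound
  have hsum : (∑ m ∈ Finset.range (m₀+1), η₀^2 * (((m:ℝ)+1)/(N:ℝ))^(2*γ))
      ≤ K * (η₀^2 * (K/N)^(2*γ)) := by
    have h : ∀ m ∈ Finset.range (m₀+1),
        η₀^2 * (((m:ℝ)+1)/(N:ℝ))^(2*γ) ≤ η₀^2 * (K/N)^(2*γ) := by
      intro m hm
      have hmle : (m:ℝ) ≤ (m₀:ℝ) := by
        exact_mod_cast Nat.lt_succ_iff.mp (Finset.mem_range.mp hm)
      have hnum : ((m:ℝ)+1) ≤ K := by rw [hK]; linarith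
      have hdiv : ((m:ℝ)+1)/N ≤ K/N := by gcongr
      have hmono := Real.rpow_le_rpow (by positivity : (0:ℝ) ≤ ((m:ℝ)+1)/N) hdiv
        (by positivity : (0:ℝ) ≤ 2*γ)
      exact mul_le_mul_of_nonneg_left hmono (sq_nonneg η₀)
    have h2 := Finset.sum_le_card_nsmul (Finset.range (m₀+1))
      (fun m => η₀^2 * (((m:ℝ)+1)/(N:ℝ))^(2*γ)) (η₀^2 * (K/N)^(2*γ)) h
    have hcard : ((Finset.range (m₀+1)).card : ℝ) = K := by
      rw [Finset.card_range]; push_cast [hK]; ring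
    calc (∑ m ∈ Finset.range (m₀+1), η₀^2 * (((m:ℝ)+1)/(N:ℝ))^(2*γ))
        ≤ ((Finset.range (m₀+1)).card : ℝ) * (η₀^2 * (K/N)^(2*γ)) := by
          simpa [nsmul_eq_mul] using h2
      _ = K * (η₀^2 * (K/N)^(2*γ)) := by rw [hcard]
  -- pow comparisons
  have hpowKN : (K/N)^(2*γ) ≤ (3/B)^(2*γ) :=
    Real.rpow_le_rpow (by positivity) hKdiv (by positivity)
  have hstep2 : K * (η₀^2 * (K/N)^(2*γ)) ≤ (3*N/B) * (η₀^2 * (3/B)^(2*γ)) := by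
    have h1 : η₀^2 * (K/N)^(2*γ) ≤ η₀^2 * (3/B)^(2*γ) :=
      mul_le_mul_of_nonneg_left hpowKN (sq_nonneg η₀)
    have h2 : (0:ℝ) ≤ η₀^2 * (K/N)^(2*γ) := by positivity
    have h3 : (0:ℝ) ≤ 3*N/B := by positivity
    exact mul_le_mul hKle h1 h2 h3
  -- rewrite RHS
  have hBsplit : (3/B)^(2*γ) = (3:ℝ)^(2*γ) / B^(2*γ) :=
    Real.div_rpow (by norm_num) hB0.le _
  have h3split : (3:ℝ)^(2*γ+1) = (3:ℝ)^(2*γ) * 3 := by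
    rw [Real.rpow_add (by norm_num : (0:ℝ) < 3), Real.rpow_one]
  have hBadd : B^(2*γ) * B = B^(2*γ+1) := by
    rw [Real.rpow_add hB0, Real.rpow_one]
  have hBE : B^(2*γ+1) = T^((2*γ+1)/(γ+1)) := by
    rw [hBdef, ← Real.rpow_mul hT0.le]
    congr 1
    field_simp
  have hB2γpos : (0:ℝ) < B^(2*γ) := Real.rpow_pos_of_pos hB0 _
  have h3pow : (0:ℝ) < (3:ℝ)^(2*γ) := Real.rpow_pos_of_pos (by norm_num) _
  have hTE : (0:ℝ) < T^((2*γ+1)/(γ+1)) := Real.rpow_pos_of_pos hT0 _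
  have hrw : (3*(N:ℝ)/B) * (η₀^2 * (3/B)^(2*γ))
      = (3:ℝ)^(2*γ+1) * η₀ * ((η₀*N) / T^((2*γ+1)/(γ+1))) := by
    rw [hBsplit, h3split, ← hBE, ← hBadd]
    field_simp
  -- final step
  have hfinal : (η₀*(N:ℝ)) / T^((2*γ+1)/(γ+1)) ≤ (2:ℝ)^(γ+1) * T^(-(γ/(γ+1))) := by
    rw [div_le_iff₀ hTE]
    have hexp : T^(-(γ/(γ+1))) * T^((2*γ+1)/(γ+1)) = T := by
      rw [← Real.rpow_add hT0]
      have : -(γ/(γ+1)) + (2*γ+1)/(γ+1) = 1 := by field_simp; ring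
      rw [this, Real.rpow_one]
    calc η₀*(N:ℝ) ≤ (2:ℝ)^(γ+1) * T := hlow
      _ = (2:ℝ)^(γ+1) * (T^(-(γ/(γ+1))) * T^((2*γ+1)/(γ+1))) := by rw [hexp]
      _ = (2:ℝ)^(γ+1) * T^(-(γ/(γ+1))) * T^((2*γ+1)/(γ+1)) := by ring
  have h3pow1 : (0:ℝ) < (3:ℝ)^(2*γ+1) := Real.rpow_pos_of_pos (by norm_num) _
  calc (∑ m ∈ Finset.range (m₀+1), η₀^2 * (((m:ℝ)+1)/(N:ℝ))^(2*γ))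
      ≤ K * (η₀^2 * (K/N)^(2*γ)) := hsum
    _ ≤ (3*N/B) * (η₀^2 * (3/B)^(2*γ)) := hstep2
    _ = (3:ℝ)^(2*γ+1) * η₀ * ((η₀*N) / T^((2*γ+1)/(γ+1))) := hrw
    _ ≤ (3:ℝ)^(2*γ+1) * η₀ * ((2:ℝ)^(γ+1) * T^(-(γ/(γ+1)))) := by
        apply mul_le_mul_of_nonneg_left hfinal (by positivity)
    _ = (3:ℝ)^(2*γ+1) * (2:ℝ)^(γ+1) * η₀ * T^(-(γ/(γ+1))) := by ring
end
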